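/- With A = θ² - t² (the Bessel operator in θ = t·d/dt), the operators L_k defined by L₀ = 1, L₁ = θ, L_{k+1} = θ∘L_k - k(n-k+1)t²·L_{k-1} have the form L_k = θ^k + Σ_{j=0}^{k-2} a_j^{(k)}(t)·θ^j, where each coefficient a_j^{(k)} is a polynomial in t², divisible by t², with deg_t a_j^{(k)} ≤ k - j. -/

import Mathlib

/-!
Give `tⁱ θʲ` the weight `i + j` and write `L_k = θ^k + R_k`. Since `θ ∘ θ^(k+1) = θ^(k+2)`, the
recursion becomes `R_(k+2) = θ ∘ R_(k+1) - c t² θ^k - c t² R_k`. Left multiplication by `θ` sends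
`tⁱ θʲ` to `tⁱ θ^(j+1) + i tⁱ θʲ`: it raises the weight by at most one and keeps the powers of `t`;
multiplication by `t²` raises the weight by two and keeps the powers of `t` even and at least 2.
Hence every monomial `tⁱ θʲ` of `R_k` has `i` even, `i ≥ 2` and `i + j ≤ k`, which gives all three
claims and also forces `j ≤ k - 2`.
-/

open Polynomial

/-- Left multiplication by θ in the Weyl-type algebra with relation θ·t = t·θ + t,
acting on operators in normal form Σ pⱼ(t)·θʲ, represented as polynomials in θ
(the outer variable) with coefficients polynomials in t:
θ ∘ (Σ pⱼ θʲ) = Σ pⱼ θ^{j+1} + Σ t·pⱼ'(t) θʲ. -/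
noncomputable def thetaMul (M : Polynomial (Polynomial ℝ)) : Polynomial (Polynomial ℝ) :=
  X * M + M.sum fun j p => C (Polynomial.X * derivative p) * X ^ j

/-- The operators L₀ = 1, L₁ = θ, L_{k+1} = θ∘L_k − k(n−k+1)·t²·L_{k−1}
for the Bessel operator A = θ² − t². -/
noncomputable def Lop (n : ℕ) : ℕ → Polynomial (Polynomial ℝ)
  | 0 => 1
  | 1 => X
  | (k + 2) => thetaMul (Lop n (k + 1))
      - C (Polynomial.C (((k : ℝ) + 1) * ((n : ℝ) - ((k : ℝ) + 1) + 1)) * Polynomial.X ^ 2)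
        * Lop n k

namespace Polynomial

section Ring

variable {R : Type*} [Ring R]

theorem coeff_X_mul_derivative (a : R[X]) (i : ℕ) :
    (X * derivative a).coeff i = a.coeff i * i := by
  cases i with
  | zero => simp
  | succ i => rw [coeff_X_mul, coeff_derivative, Nat.cast_succ]

variable (R) in
def weightCoeffs (w j : ℕ) : AddSubgroup R[X] where
  carrier := {a | ∀ i, a.coeff i ≠ 0 → Even i ∧ 2 ≤ i ∧ i + j ≤ w}
  add_mem' {a b} ha hb i h := by
    by_cases hai : a.coeff i = 0
    · exact hb i (by simpa [hai] using h)
    · exact ha i hai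
  zero_mem' := by simp
  neg_mem' := by simp

variable (R) in
def lowerTerms (w : ℕ) : AddSubgroup R[X][X] where
  carrier := {M | ∀ j, M.coeff j ∈ weightCoeffs R w j}
  add_mem' ha hb j := by simpa using add_mem (ha j) (hb j)
  zero_mem' := by simp
  neg_mem' ha j := by simpa using neg_mem (ha j)

theorem mem_weightCoeffs {w j : ℕ} {a : R[X]} :
    a ∈ weightCoeffs R w j ↔ ∀ i, a.coeff i ≠ 0 → Even i ∧ 2 ≤ i ∧ i + j ≤ w :=
  Iff.rfl

theorem weightCoeffs_succ_succ (w j : ℕ) :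
    weightCoeffs R (w + 1) (j + 1) = weightCoeffs R w j := by
  ext a
  simp only [mem_weightCoeffs, Nat.add_le_add_iff_right, ← add_assoc]

theorem X_mul_derivative_mem_weightCoeffs {w j : ℕ} {a : R[X]}
    (ha : a ∈ weightCoeffs R w j) : X * derivative a ∈ weightCoeffs R w j := fun i h ↦
  ha i (left_ne_zero_of_mul (by rwa [← coeff_X_mul_derivative]))

theorem weightCoeffs_mono {w w' j : ℕ} (hw : w ≤ w') :
    weightCoeffs R w j ≤ weightCoeffs R w' j := fun _ ha i h ↦
  (ha i h).imp_right (And.imp_right (·.trans hw))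

theorem C_mul_X_sq_mul_mem_weightCoeffs {w j : ℕ} (c : R) {a : R[X]}
    (ha : a ∈ weightCoeffs R w j) : C c * X ^ 2 * a ∈ weightCoeffs R (w + 2) j := by
  intro i h
  rw [mul_assoc, coeff_C_mul, coeff_X_pow_mul'] at h
  split_ifs at h with hi
  · obtain ⟨heven, -, hw⟩ := ha (i - 2) (right_ne_zero_of_mul h)
    exact ⟨(Nat.even_sub hi).mp heven |>.mpr even_two, hi, by omega⟩
  · simp at h

theorem C_mul_X_sq_mem_weightCoeffs {w j : ℕ} (c : R) (h : 2 + j ≤ w) :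
    C c * X ^ 2 ∈ weightCoeffs R w j := by
  intro i hi
  rw [coeff_C_mul, coeff_X_pow] at hi
  split_ifs at hi with h2
  · exact ⟨h2 ▸ even_two, h2.ge, h2 ▸ h⟩
  · simp at hi

theorem coeff_eq_zero_of_mem_lowerTerms {w j : ℕ} {M : R[X][X]} (hM : M ∈ lowerTerms R w)
    (hj : w < j + 2) : M.coeff j = 0 := by
  ext i
  by_contra h
  obtain ⟨-, hi, hw⟩ := hM j i h
  omega

theorem eq_sum_range_of_mem_lowerTerms {w : ℕ} {M : R[X][X]} (hM : M ∈ lowerTerms R w) :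
    M = ∑ j ∈ Finset.range (w - 1), C (M.coeff j) * X ^ j := by
  ext1 j
  simp only [finsetSum_coeff, coeff_C_mul_X_pow, Finset.sum_ite_eq, Finset.mem_range]
  split_ifs with hj
  · rfl
  · exact coeff_eq_zero_of_mem_lowerTerms hM (by omega)

theorem C_mul_X_sq_mul_mem_lowerTerms {w : ℕ} (c : R) {M : R[X][X]}
    (hM : M ∈ lowerTerms R w) : C (C c * X ^ 2) * M ∈ lowerTerms R (w + 2) := fun j ↦ by
  rw [coeff_C_mul]
  exact C_mul_X_sq_mul_mem_weightCoeffs c (hM j)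

theorem C_mul_X_sq_mul_X_pow_mem_lowerTerms (c : R) (k : ℕ) :
    C (C c * X ^ 2) * X ^ k ∈ lowerTerms R (k + 2) := fun j ↦ by
  rw [coeff_C_mul_X_pow]
  split_ifs with hj
  · exact C_mul_X_sq_mem_weightCoeffs c (by omega)
  · exact zero_mem _

theorem mem_weightCoeffs_coeff_X_mul {w j : ℕ} {M : R[X][X]} (hM : M ∈ lowerTerms R w) :
    (X * M).coeff j ∈ weightCoeffs R (w + 1) j := by
  cases j with
  | zero => simp
  | succ j => rw [coeff_X_mul, weightCoeffs_succ_succ]; exact hM j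

end Ring

section CommRing

variable {R : Type*} [CommRing R] {w j : ℕ} {a : R[X]}

theorem exists_eq_comp_X_sq_of_mem_weightCoeffs (ha : a ∈ weightCoeffs R w j) :
    ∃ q : R[X], a = q.comp (X ^ 2) := by
  refine ⟨contract 2 a, ?_⟩
  rw [← expand_eq_comp_X_pow]
  ext i
  rw [coeff_expand two_pos, coeff_contract two_ne_zero]
  split_ifs with h
  · rw [Nat.div_mul_cancel h]
  · by_contra! hi
    exact h (even_iff_two_dvd.mp (ha i hi).1)

theorem X_sq_dvd_of_mem_weightCoeffs (ha : a ∈ weightCoeffs R w j) : X ^ 2 ∣ a :=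
  X_pow_dvd_iff.mpr fun i hi ↦ by
    by_contra h
    exact absurd (ha i h).2.1 (by omega)

theorem natDegree_le_of_mem_weightCoeffs (ha : a ∈ weightCoeffs R w j) :
    a.natDegree ≤ w - j :=
  natDegree_le_iff_coeff_eq_zero.mpr fun i hi ↦ by
    by_contra h
    exact absurd (ha i h).2.2 (by omega)

end CommRing

end Polynomial

theorem coeff_thetaMul (M : Polynomial (Polynomial ℝ)) (j : ℕ) :
    (thetaMul M).coeff j = (X * M).coeff j + Polynomial.X * derivative (M.coeff j) := by
  rw [thetaMul, coeff_add, coeff_sum, Polynomial.sum_def]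
  simp only [coeff_C_mul_X_pow, Finset.sum_ite_eq, mem_support_iff, ite_not]
  split_ifs with h <;> simp [h]

theorem thetaMul_add (M N : Polynomial (Polynomial ℝ)) :
    thetaMul (M + N) = thetaMul M + thetaMul N := by
  ext1 j
  simp only [coeff_thetaMul, coeff_add, mul_add, derivative_add]
  abel

theorem thetaMul_X_pow (k : ℕ) : thetaMul (X ^ k) = X ^ (k + 1) := by
  ext1 j
  rw [coeff_thetaMul, ← pow_succ', coeff_X_pow k j]
  split_ifs <;> simp

theorem thetaMul_mem_lowerTerms {w : ℕ} {M : Polynomial (Polynomial ℝ)}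
    (hM : M ∈ lowerTerms ℝ w) : thetaMul M ∈ lowerTerms ℝ (w + 1) := fun j ↦ by
  rw [coeff_thetaMul]
  exact add_mem (mem_weightCoeffs_coeff_X_mul hM)
    (weightCoeffs_mono w.le_succ (X_mul_derivative_mem_weightCoeffs (hM j)))

theorem Lop_sub_X_pow_mem_lowerTerms (n : ℕ) : ∀ k, Lop n k - X ^ k ∈ lowerTerms ℝ k
  | 0 => by simp [Lop]
  | 1 => by simp [Lop]
  | k + 2 => by
    set c : ℝ := ((k : ℝ) + 1) * ((n : ℝ) - ((k : ℝ) + 1) + 1)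
    have hrec : Lop n (k + 2) - X ^ (k + 2) = thetaMul (Lop n (k + 1) - X ^ (k + 1))
        - C (C c * X ^ 2) * X ^ k - C (C c * X ^ 2) * (Lop n k - X ^ k) := by
      conv_lhs => rw [Lop, ← sub_add_cancel (Lop n (k + 1)) (X ^ (k + 1)), thetaMul_add,
        thetaMul_X_pow]
      ring
    rw [hrec]
    refine sub_mem (sub_mem (thetaMul_mem_lowerTerms (Lop_sub_X_pow_mem_lowerTerms n (k + 1)))
      (C_mul_X_sq_mul_X_pow_mem_lowerTerms c k)) ?_
    exact C_mul_X_sq_mul_mem_lowerTerms c (Lop_sub_X_pow_mem_lowerTerms n k)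

theorem Lop_closed_form_general (n : ℕ) :
    ∀ k ≤ n + 1, ∃ a : ℕ → Polynomial ℝ,
      Lop n k = X ^ k + ∑ j ∈ Finset.range (k - 1), C (a j) * X ^ j ∧
      ∀ j < k - 1,
        (∃ q : Polynomial ℝ, a j = q.comp (Polynomial.X ^ 2)) ∧
        (Polynomial.X ^ 2 ∣ a j) ∧
        (a j).natDegree ≤ k - j := by
  intro k _
  have hL := Lop_sub_X_pow_mem_lowerTerms n k
  refine ⟨(Lop n k - X ^ k).coeff, ?_, fun j _ ↦ ?_⟩
  · rw [← eq_sum_range_of_mem_lowerTerms hL, add_sub_cancel]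
  · exact ⟨exists_eq_comp_X_sq_of_mem_weightCoeffs (hL j), X_sq_dvd_of_mem_weightCoeffs (hL j),
      natDegree_le_of_mem_weightCoeffs (hL j)⟩

theorem Lop_closed_form (n : ℕ) (hn : 1 ≤ n) :
    ∀ k ≤ n + 1, ∃ a : ℕ → Polynomial ℝ,
      Lop n k = X ^ k + ∑ j ∈ Finset.range (k - 1), C (a j) * X ^ j ∧
      ∀ j < k - 1,
        (∃ q : Polynomial ℝ, a j = q.comp (Polynomial.X ^ 2)) ∧
        (Polynomial.X ^ 2 ∣ a j) ∧
        (a j).natDegree ≤ k - j :=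
  Lop_closed_form_general n
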